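/- arXiv:2604.01715 — 4 statements merged into one kernel-verified Lean document; each statement's English description precedes it below -/
import Mathlib

section
/- Let (Z_i)_{0≤i≤N} be the forward Euler trajectory Z_{i+1} = Z_i + Δt·v(Z_i, t_i) and let (Ẑ_i)_{0≤i≤N} be the backward Euler trajectory defined by Ẑ_N = Z_N and Ẑ_i = Ẑ_{i+1} − Δt·v(Ẑ_{i+1}, t_{i+1}). If the velocity increments along the forward trajectory satisfy ‖v(Z_{i+1}, t_{i+1}) − v(Z_i, t_i)‖ ≤ M·Δt for all 0 ≤ i ≤ N−1 with M ≥ 0, then the inversion error satisfies ‖Ẑ_0 − Z_0‖ ≤ (M·Δt/L)·((1 + L·Δt)^N − 1). -/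
/-- **Euler inversion error bound (geometric form).**
Forward Euler trajectory `Z`, backward Euler trajectory `Zh` started from the
terminal forward point.  If the velocity increments along the forward trajectory
are bounded by `M * Δt`, then the inversion error at index `0` is bounded by
`(M * Δt / L) * ((1 + L * Δt) ^ N - 1)`. -/
theorem stmt_0
    {E : Type*} [NormedAddCommGroup E] [NormedSpace ℝ E]
    (N : ℕ) (hN : 1 ≤ N)
    (Δt : ℝ) (hΔt : Δt = 1 / N)
    (t : ℕ → ℝ) (ht : ∀ i, t i = i * Δt)
    (v : E → ℝ → E) (L : ℝ) (hL : 0 < L)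
    (hLip : ∀ z z' : E, ∀ s : ℝ, ‖v z s - v z' s‖ ≤ L * ‖z - z'‖)
    (Z Zh : ℕ → E)
    (hfwd : ∀ i < N, Z (i + 1) = Z i + Δt • v (Z i) (t i))
    (hterm : Zh N = Z N)
    (hbwd : ∀ i < N, Zh i = Zh (i + 1) - Δt • v (Zh (i + 1)) (t (i + 1)))
    (M : ℝ) (hM : 0 ≤ M)
    (hcurv : ∀ i < N, ‖v (Z (i + 1)) (t (i + 1)) - v (Z i) (t i)‖ ≤ M * Δt) :
    ‖Zh 0 - Z 0‖ ≤ (M * Δt / L) * ((1 + L * Δt) ^ N - 1) := by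
  have hΔt0 : 0 < Δt := by
    rw [hΔt]
    positivity
  -- one-step recursion
  have step : ∀ i < N, ‖Zh i - Z i‖ ≤
      (1 + L * Δt) * ‖Zh (i + 1) - Z (i + 1)‖ + M * Δt * Δt := by
    intro i hi
    have hid : Zh i - Z i = (Zh (i + 1) - Z (i + 1))
        - Δt • (v (Zh (i + 1)) (t (i + 1)) - v (Z (i + 1)) (t (i + 1)))
        - Δt • (v (Z (i + 1)) (t (i + 1)) - v (Z i) (t i)) := by
      rw [hbwd i hi, hfwd i hi]
      simp [smul_sub]
      abel
    calc ‖Zh i - Z i‖ ≤ ‖Zh (i + 1) - Z (i + 1)‖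
          + ‖Δt • (v (Zh (i + 1)) (t (i + 1)) - v (Z (i + 1)) (t (i + 1)))‖
          + ‖Δt • (v (Z (i + 1)) (t (i + 1)) - v (Z i) (t i))‖ := by
          rw [hid]
          exact (norm_sub_le _ _).trans (by gcongr; exact norm_sub_le _ _)
      _ ≤ ‖Zh (i + 1) - Z (i + 1)‖ + Δt * (L * ‖Zh (i + 1) - Z (i + 1)‖)
          + Δt * (M * Δt) := by
          rw [norm_smul, norm_smul, Real.norm_eq_abs, abs_of_pos hΔt0]
          gcongr
          · exact hLip _ _ _
          · exact hcurv i hi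
      _ = (1 + L * Δt) * ‖Zh (i + 1) - Z (i + 1)‖ + M * Δt * Δt := by ring
  -- backward induction
  have key : ∀ k, k ≤ N → ‖Zh (N - k) - Z (N - k)‖ ≤
      (M * Δt / L) * ((1 + L * Δt) ^ k - 1) := by
    intro k
    induction k with
    | zero => intro _; simp [hterm]
    | succ k ih =>
      intro hk
      have hk' : k ≤ N := Nat.le_of_succ_le hk
      have hi : N - (k + 1) < N := by omega
      have hi1 : N - (k + 1) + 1 = N - k := by omega
      have h1 := step _ hi
      rw [hi1] at h1
      have h2 := ih hk'
      have hpos : 0 < 1 + L * Δt := by positivity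
      have := h1.trans (by gcongr : (1 + L * Δt) * ‖Zh (N - k) - Z (N - k)‖ + M * Δt * Δt
        ≤ (1 + L * Δt) * ((M * Δt / L) * ((1 + L * Δt) ^ k - 1)) + M * Δt * Δt)
      refine this.trans (le_of_eq ?_)
      field_simp
      ring
  have := key N le_rfl
  simpa using this
end

section
/- Let (Z_i)_{0≤i≤N} be the forward Euler trajectory Z_{i+1} = Z_i + Δt·v(Z_i, t_i) and let (Ẑ_i)_{0≤i≤N} be the backward Euler trajectory defined by Ẑ_N = Z_N and Ẑ_i = Ẑ_{i+1} − Δt·v(Ẑ_{i+1}, t_{i+1}). If ‖v(Z_{i+1}, t_{i+1}) − v(Z_i, t_i)‖ ≤ M·Δt for all 0 ≤ i ≤ N−1 with M ≥ 0, then the inversion error admits the N-independent exponential bound ‖Ẑ_0 − Z_0‖ ≤ (M·Δt/L)·(e^L − 1). -/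
/-- **Euler inversion error bound (N-independent exponential form).** -/
theorem stmt_1
    {E : Type*} [NormedAddCommGroup E] [NormedSpace ℝ E]
    (N : ℕ) (hN : 1 ≤ N)
    (Δt : ℝ) (hΔt : Δt = 1 / N)
    (t : ℕ → ℝ) (ht : ∀ i, t i = i * Δt)
    (v : E → ℝ → E) (L : ℝ) (hL : 0 < L)
    (hLip : ∀ z z' : E, ∀ s : ℝ, ‖v z s - v z' s‖ ≤ L * ‖z - z'‖)
    (Z Zh : ℕ → E)
    (hfwd : ∀ i < N, Z (i + 1) = Z i + Δt • v (Z i) (t i))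
    (hterm : Zh N = Z N)
    (hbwd : ∀ i < N, Zh i = Zh (i + 1) - Δt • v (Zh (i + 1)) (t (i + 1)))
    (M : ℝ) (hM : 0 ≤ M)
    (hcurv : ∀ i < N, ‖v (Z (i + 1)) (t (i + 1)) - v (Z i) (t i)‖ ≤ M * Δt) :
    ‖Zh 0 - Z 0‖ ≤ (M * Δt / L) * (Real.exp L - 1) := by
  have hNpos : (0:ℝ) < N := by exact_mod_cast hN
  have hΔtpos : 0 < Δt := by rw [hΔt]; positivity
  set A : ℝ := 1 + L * Δt with hA
  have hA1 : (1:ℝ) ≤ A := by nlinarith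
  have hA0 : (0:ℝ) ≤ A := by linarith
  have key : ∀ j, j ≤ N → ‖Zh (N - j) - Z (N - j)‖ ≤ (M * Δt / L) * (A ^ j - 1) := by
    intro j hj
    induction j with
    | zero => simp [hterm]
    | succ j ih =>
      have hj' : j ≤ N := Nat.le_of_succ_le hj
      have ihj := ih hj'
      set i := N - (j + 1) with hi
      have hiN : i < N := by omega
      have hsucc : i + 1 = N - j := by omega
      rw [← hsucc] at ihj
      have h1 := hbwd i hiN
      have h2 := hfwd i hiN
      have hdiff : Zh i - Z i = (Zh (i+1) - Z (i+1))
          - Δt • (v (Zh (i+1)) (t (i+1)) - v (Z (i+1)) (t (i+1)))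
          - Δt • (v (Z (i+1)) (t (i+1)) - v (Z i) (t i)) := by
        rw [h1, h2]; module
      have hb1 : ‖v (Zh (i+1)) (t (i+1)) - v (Z (i+1)) (t (i+1))‖
          ≤ L * ‖Zh (i+1) - Z (i+1)‖ := hLip _ _ _
      have hb2 := hcurv i hiN
      have hnorm : ‖Zh i - Z i‖ ≤ ‖Zh (i+1) - Z (i+1)‖
          + Δt * (L * ‖Zh (i+1) - Z (i+1)‖) + Δt * (M * Δt) := by
        rw [hdiff]
        have := norm_sub_le ((Zh (i+1) - Z (i+1))
          - Δt • (v (Zh (i+1)) (t (i+1)) - v (Z (i+1)) (t (i+1))))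
          (Δt • (v (Z (i+1)) (t (i+1)) - v (Z i) (t i)))
        have h3 := norm_sub_le (Zh (i+1) - Z (i+1))
          (Δt • (v (Zh (i+1)) (t (i+1)) - v (Z (i+1)) (t (i+1))))
        rw [norm_smul, Real.norm_of_nonneg hΔtpos.le] at this h3
        have hs1 : Δt * ‖v (Zh (i+1)) (t (i+1)) - v (Z (i+1)) (t (i+1))‖
            ≤ Δt * (L * ‖Zh (i+1) - Z (i+1)‖) := by
          exact mul_le_mul_of_nonneg_left hb1 hΔtpos.le
        have hs2 : Δt * ‖v (Z (i+1)) (t (i+1)) - v (Z i) (t i)‖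
            ≤ Δt * (M * Δt) := mul_le_mul_of_nonneg_left hb2 hΔtpos.le
        linarith
      have hpow : A ^ (j+1) = A * A ^ j := by ring
      have hmul : A * ‖Zh (i+1) - Z (i+1)‖ ≤ A * ((M * Δt / L) * (A ^ j - 1)) :=
        mul_le_mul_of_nonneg_left ihj hA0
      have hLne : L ≠ 0 := ne_of_gt hL
      have : ‖Zh i - Z i‖ ≤ A * ((M * Δt / L) * (A ^ j - 1)) + Δt * (M * Δt) := by
        have : ‖Zh (i+1) - Z (i+1)‖ + Δt * (L * ‖Zh (i+1) - Z (i+1)‖)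
            = A * ‖Zh (i+1) - Z (i+1)‖ := by rw [hA]; ring
        linarith
      calc ‖Zh i - Z i‖ ≤ A * ((M * Δt / L) * (A ^ j - 1)) + Δt * (M * Δt) := this
        _ = (M * Δt / L) * (A ^ (j+1) - 1) := by
            rw [hpow, hA]; field_simp; ring
  have h0 := key N le_rfl
  rw [Nat.sub_self] at h0
  have hexp : A ^ N ≤ Real.exp L := by
    have h1 : A ≤ Real.exp (L * Δt) := by
      have := Real.add_one_le_exp (L * Δt)
      linarith
    calc A ^ N ≤ (Real.exp (L * Δt)) ^ N :=
          pow_le_pow_left₀ hA0 h1 N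
      _ = Real.exp (L * Δt * N) := by rw [← Real.exp_nat_mul]; ring_nf
      _ = Real.exp L := by
          congr 1
          rw [hΔt]; field_simp
  have hcoef : 0 ≤ M * Δt / L := by positivity
  calc ‖Zh 0 - Z 0‖ ≤ (M * Δt / L) * (A ^ N - 1) := h0
    _ ≤ (M * Δt / L) * (Real.exp L - 1) := by
        apply mul_le_mul_of_nonneg_left _ hcoef
        linarith
end

section
/- Let (Z_i)_{0≤i≤N} be the forward Euler trajectory Z_{i+1} = Z_i + Δt·v(Z_i, t_i) and let (Ẑ_i)_{0≤i≤N} be the backward Euler trajectory defined by Ẑ_N = Z_N and Ẑ_i = Ẑ_{i+1} − Δt·v(Ẑ_{i+1}, t_{i+1}). Suppose M ≥ 0 and for a fixed index i with 0 ≤ i ≤ N−1 one has ‖v(Z_{i+1}, t_{i+1}) − v(Z_i, t_i)‖ ≤ M·Δt. Then the per-step inversion error satisfies the recurrence ‖Ẑ_i − Z_i‖ ≤ (1 + L·Δt)·‖Ẑ_{i+1} − Z_{i+1}‖ + M·Δt². -/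
/-- **Per-step inversion error recurrence** for a fixed step index `i`. -/
theorem stmt_3
    {E : Type*} [NormedAddCommGroup E] [NormedSpace ℝ E]
    (N : ℕ) (hN : 1 ≤ N)
    (Δt : ℝ) (hΔt : Δt = 1 / N)
    (t : ℕ → ℝ) (ht : ∀ i, t i = i * Δt)
    (v : E → ℝ → E) (L : ℝ) (hL : 0 < L)
    (hLip : ∀ z z' : E, ∀ s : ℝ, ‖v z s - v z' s‖ ≤ L * ‖z - z'‖)
    (Z Zh : ℕ → E)
    (hfwd : ∀ j < N, Z (j + 1) = Z j + Δt • v (Z j) (t j))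
    (hterm : Zh N = Z N)
    (hbwd : ∀ j < N, Zh j = Zh (j + 1) - Δt • v (Zh (j + 1)) (t (j + 1)))
    (M : ℝ) (hM : 0 ≤ M)
    (i : ℕ) (hi : i < N)
    (hcurv : ‖v (Z (i + 1)) (t (i + 1)) - v (Z i) (t i)‖ ≤ M * Δt) :
    ‖Zh i - Z i‖ ≤ (1 + L * Δt) * ‖Zh (i + 1) - Z (i + 1)‖ + M * Δt ^ 2 := by
  have hΔt0 : 0 ≤ Δt := by
    rw [hΔt]; positivity
  have key : Zh i - Z i =
      (Zh (i + 1) - Z (i + 1))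
        - Δt • (v (Zh (i + 1)) (t (i + 1)) - v (Z (i + 1)) (t (i + 1)))
        - Δt • (v (Z (i + 1)) (t (i + 1)) - v (Z i) (t i)) := by
    rw [hbwd i hi, hfwd i hi]
    simp only [smul_sub]
    abel
  rw [key]
  calc ‖Zh (i + 1) - Z (i + 1)
        - Δt • (v (Zh (i + 1)) (t (i + 1)) - v (Z (i + 1)) (t (i + 1)))
        - Δt • (v (Z (i + 1)) (t (i + 1)) - v (Z i) (t i))‖
      ≤ ‖Zh (i + 1) - Z (i + 1)‖
        + ‖Δt • (v (Zh (i + 1)) (t (i + 1)) - v (Z (i + 1)) (t (i + 1)))‖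
        + ‖Δt • (v (Z (i + 1)) (t (i + 1)) - v (Z i) (t i))‖ := by
        refine (norm_sub_le _ _).trans ?_
        gcongr
        exact norm_sub_le _ _
    _ ≤ ‖Zh (i + 1) - Z (i + 1)‖ + Δt * (L * ‖Zh (i + 1) - Z (i + 1)‖)
        + Δt * (M * Δt) := by
        rw [norm_smul, norm_smul, Real.norm_of_nonneg hΔt0]
        gcongr
        exact hLip _ _ _
    _ = (1 + L * Δt) * ‖Zh (i + 1) - Z (i + 1)‖ + M * Δt ^ 2 := by ring
end

section
/- Let ṽ, v : E → ℝ → E with ṽ L-Lipschitz in its first argument (L > 0), let α ∈ (0,1], and δ ≥ 0. Let (Z^src_i)_{0≤i≤N} satisfy Z^src_i = Z^src_{i+1} − Δt·v(Z^src_{i+1}, t_{i+1}) and assume ‖ṽ(Z^src_i, t_i) − v(Z^src_i, t_i)‖ ≤ δ for all 0 ≤ i ≤ N. Let (Z^edit_i)_{0≤i≤N} satisfy Z^edit_N = Z^src_N and Z^edit_i = Z^edit_{i+1} − Δt·(V^src_{i+1} + α·(ṽ(Z^edit_{i+1}, t_{i+1}) − V^src_{i+1})), where V^src_{i+1} = v(Z^src_{i+1},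 t_{i+1}). Then the SteerFlow editing error satisfies ‖Z^edit_0 − Z^src_0‖ ≤ (δ/L)·((1 + α·L·Δt)^N − 1) ≤ (δ/L)·(e^{α·L} − 1). -/
/-- **SteerFlow global editing error bound.** -/
theorem stmt_13
    {E : Type*} [NormedAddCommGroup E] [NormedSpace ℝ E]
    (N : ℕ) (hN : 1 ≤ N)
    (Δt : ℝ) (hΔt : Δt = 1 / N)
    (t : ℕ → ℝ) (ht : ∀ i, t i = i * Δt)
    (vt v : E → ℝ → E) (L : ℝ) (hL : 0 < L)
    (hLip : ∀ z z' : E, ∀ s : ℝ, ‖vt z s - vt z' s‖ ≤ L * ‖z - z'‖)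
    (α : ℝ) (hα₀ : 0 < α) (hα₁ : α ≤ 1)
    (δ : ℝ) (hδ : 0 ≤ δ)
    (Zsrc Zedit : ℕ → E)
    (hsrc : ∀ i < N, Zsrc i = Zsrc (i + 1) - Δt • v (Zsrc (i + 1)) (t (i + 1)))
    (hdev : ∀ i ≤ N, ‖vt (Zsrc i) (t i) - v (Zsrc i) (t i)‖ ≤ δ)
    (hterm : Zedit N = Zsrc N)
    (hedit : ∀ i < N, Zedit i = Zedit (i + 1) -
      Δt • (v (Zsrc (i + 1)) (t (i + 1)) +
        α • (vt (Zedit (i + 1)) (t (i + 1)) - v (Zsrc (i + 1)) (t (i + 1))))) :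
    ‖Zedit 0 - Zsrc 0‖ ≤ (δ / L) * ((1 + α * L * Δt) ^ N - 1) ∧
      (δ / L) * ((1 + α * L * Δt) ^ N - 1) ≤ (δ / L) * (Real.exp (α * L) - 1) := by
  have hNpos : (0:ℝ) < (N:ℝ) := by exact_mod_cast hN
  have hΔtpos : 0 < Δt := by rw [hΔt]; positivity
  set C := 1 + α * L * Δt with hC
  have hpos : 0 < α * L * Δt := by positivity
  have hC1 : 1 ≤ C := by rw [hC]; linarith
  have hC0 : (0:ℝ) ≤ C := by linarith
  have key : ∀ i < N, ‖Zedit i - Zsrc i‖ ≤ C * ‖Zedit (i+1) - Zsrc (i+1)‖ + α * Δt * δ := by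
    intro i hi
    have h1 : Zedit i - Zsrc i = (Zedit (i+1) - Zsrc (i+1))
        - (Δt * α) • (vt (Zedit (i+1)) (t (i+1)) - v (Zsrc (i+1)) (t (i+1))) := by
      rw [hedit i hi, hsrc i hi, smul_add, mul_smul]
      abel
    have h2 : ‖vt (Zedit (i+1)) (t (i+1)) - v (Zsrc (i+1)) (t (i+1))‖
        ≤ L * ‖Zedit (i+1) - Zsrc (i+1)‖ + δ := by
      calc ‖vt (Zedit (i+1)) (t (i+1)) - v (Zsrc (i+1)) (t (i+1))‖
          ≤ ‖vt (Zedit (i+1)) (t (i+1)) - vt (Zsrc (i+1)) (t (i+1))‖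
            + ‖vt (Zsrc (i+1)) (t (i+1)) - v (Zsrc (i+1)) (t (i+1))‖ := by
            have := norm_add_le (vt (Zedit (i+1)) (t (i+1)) - vt (Zsrc (i+1)) (t (i+1)))
              (vt (Zsrc (i+1)) (t (i+1)) - v (Zsrc (i+1)) (t (i+1)))
            rwa [sub_add_sub_cancel] at this
        _ ≤ L * ‖Zedit (i+1) - Zsrc (i+1)‖ + δ :=
            add_le_add (hLip _ _ _) (hdev (i+1) hi)
    have h3 : ‖Zedit i - Zsrc i‖ ≤ ‖Zedit (i+1) - Zsrc (i+1)‖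
        + (Δt * α) * ‖vt (Zedit (i+1)) (t (i+1)) - v (Zsrc (i+1)) (t (i+1))‖ := by
      rw [h1]
      calc _ ≤ ‖Zedit (i+1) - Zsrc (i+1)‖
            + ‖(Δt * α) • (vt (Zedit (i+1)) (t (i+1)) - v (Zsrc (i+1)) (t (i+1)))‖ :=
          norm_sub_le _ _
        _ = _ := by
          rw [norm_smul, Real.norm_eq_abs, abs_of_pos (by positivity)]
    nlinarith [norm_nonneg (vt (Zedit (i+1)) (t (i+1)) - v (Zsrc (i+1)) (t (i+1))),
      mul_le_mul_of_nonneg_left h2 (le_of_lt (by positivity : (0:ℝ) < Δt * α))]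
  have main : ∀ k ≤ N, ‖Zedit (N-k) - Zsrc (N-k)‖ ≤ (δ/L) * (C^k - 1) := by
    intro k
    induction k with
    | zero => intro _; simp [hterm]
    | succ k ih =>
      intro hk
      have hk' : k ≤ N := Nat.le_of_succ_le hk
      have hi : N - (k+1) < N := by omega
      have heq : N - (k+1) + 1 = N - k := by omega
      have hkey := key (N-(k+1)) hi
      rw [heq] at hkey
      have ihk := ih hk'
      have hCk : (1:ℝ) ≤ C^k := one_le_pow₀ hC1
      calc ‖Zedit (N-(k+1)) - Zsrc (N-(k+1))‖
          ≤ C * ((δ/L)*(C^k-1)) + α * Δt * δ := by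
            nlinarith [norm_nonneg (Zedit (N-k) - Zsrc (N-k))]
        _ = (δ/L) * (C^(k+1) - 1) := by
            rw [hC]; field_simp; ring
    
  constructor
  · have := main N le_rfl
    simpa using this
  · have hexp : C ^ N ≤ Real.exp (α * L) := by
      have h1 : C ≤ Real.exp (α * L * Δt) := by
        have := Real.add_one_le_exp (α * L * Δt)
        linarith
      calc C ^ N ≤ Real.exp (α * L * Δt) ^ N := pow_le_pow_left₀ hC0 h1 N
        _ = Real.exp (N * (α * L * Δt)) := (Real.exp_nat_mul _ N).symm
        _ = Real.exp (α * L) := by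
            congr 1
            rw [hΔt]
            field_simp
    have hdL : 0 ≤ δ / L := by positivity
    nlinarith
end
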